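/- For all positive integers m and n, ∑_{r_1,…,r_{3m} ≤ n} ∏_{k=1}^{3m} qbinom(n-r_k, r_{k+1}) · q^{C(r_k,2)} · (-1)^{r_k} = (-1)^{mn} (n+1) q^{m·C(n,2)}, where r_{3m+1} := r_1, as an identity of polynomials in q. -/

import Mathlib

/-!
Let `ε j = (-1)^j q^C(j,2)` and let `M` be the `(n+1) × (n+1)` matrix `M r s = ε r * [n-r, s]_q`.
The summand is a cyclic product of entries of `M`, so the sum is `trace (M^(3m))`.
A q-analogue of a Vandermonde-type identity gives
`(M^2) r t = ε r * q^((n-r)(n-t)) * [r, n-t]_q`, and one more multiplication collapses, through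
the alternating sum `∑ ε s [a, s]_q = δ_{a,0}`, to `M^3 = ε n • 1`.
Hence `trace (M^(3m)) = (n+1) * (ε n)^m`.
-/

open Finset

/-- The Gaussian (q-)binomial coefficient as a rational function in `q = RatFunc.X`. -/
noncomputable def qbin (a b : ℕ) : RatFunc ℚ :=
  if b ≤ a then ∏ i ∈ Finset.range b,
    (1 - RatFunc.X ^ (a - i)) / (1 - RatFunc.X ^ (i + 1)) else 0

local notation "X" => (RatFunc.X : RatFunc ℚ)

lemma one_sub_X_pow_ne_zero {k : ℕ} (hk : k ≠ 0) : 1 - X ^ k ≠ 0 := by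
  rw [sub_ne_zero, ne_comm, ← RatFunc.algebraMap_X, ← map_pow,
    ← map_one (algebraMap (Polynomial ℚ) (RatFunc ℚ)),
    (RatFunc.algebraMap_injective ℚ).ne_iff]
  intro h
  simpa [hk] using congrArg Polynomial.natDegree h

noncomputable def qfac (k : ℕ) : RatFunc ℚ := ∏ i ∈ range k, (1 - X ^ (i + 1))

lemma qfac_ne_zero (k : ℕ) : qfac k ≠ 0 :=
  prod_ne_zero_iff.2 fun i _ => one_sub_X_pow_ne_zero i.succ_ne_zero

lemma qfac_succ (k : ℕ) : qfac (k + 1) = qfac k * (1 - X ^ (k + 1)) :=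
  prod_range_succ _ _

lemma qfac_eq_qfac_sub_mul {a b : ℕ} (h : b ≤ a) :
    qfac a = qfac (a - b) * ∏ i ∈ range b, (1 - X ^ (a - i)) := by
  induction b with
  | zero => simp
  | succ b ih =>
    rw [ih (by omega), prod_range_succ, show a - b = a - (b + 1) + 1 by omega, qfac_succ]
    ring

lemma qbin_eq_qfac_div {a b : ℕ} (h : b ≤ a) :
    qbin a b = qfac a / (qfac b * qfac (a - b)) := by
  rw [qbin, if_pos h, prod_div_distrib, qfac_eq_qfac_sub_mul h]
  change _ / qfac b = _
  field_simp [qfac_ne_zero]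

lemma qbin_zero_right (a : ℕ) : qbin a 0 = 1 := by simp [qbin]

lemma qbin_of_lt {a b : ℕ} (h : a < b) : qbin a b = 0 := by
  rw [qbin, if_neg (by omega)]

lemma qbin_self (a : ℕ) : qbin a a = 1 := by
  rw [qbin_eq_qfac_div le_rfl, Nat.sub_self, show qfac 0 = 1 from prod_range_zero _, mul_one,
    div_self (qfac_ne_zero a)]

lemma qbin_symm {a b : ℕ} (h : b ≤ a) : qbin a b = qbin a (a - b) := by
  rw [qbin_eq_qfac_div h, qbin_eq_qfac_div (by omega), Nat.sub_sub_self h, mul_comm]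

lemma qbin_succ_succ (a s : ℕ) :
    qbin (a + 1) (s + 1) = qbin a s + X ^ (s + 1) * qbin a (s + 1) := by
  rcases lt_trichotomy s a with h | rfl | h
  · obtain ⟨d, rfl⟩ : ∃ d, a = s + 1 + d := ⟨a - s - 1, by omega⟩
    rw [qbin_eq_qfac_div (by omega), qbin_eq_qfac_div (by omega), qbin_eq_qfac_div (by omega),
      show s + 1 + d + 1 - (s + 1) = d + 1 by omega, show s + 1 + d - s = d + 1 by omega,
      Nat.add_sub_cancel_left, qfac_succ (s + 1 + d), qfac_succ s, qfac_succ d]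
    field_simp [qfac_ne_zero, one_sub_X_pow_ne_zero]
    ring
  · rw [qbin_self, qbin_self, qbin_of_lt s.lt_succ_self, mul_zero, add_zero]
  · rw [qbin_of_lt (by omega), qbin_of_lt h, qbin_of_lt (by omega), mul_zero, add_zero]

lemma qbin_succ_succ' (m t : ℕ) :
    qbin (m + 1) (t + 1) = X ^ (m - t) * qbin m t + qbin m (t + 1) := by
  rcases Nat.lt_or_ge m t with h | h
  · rw [qbin_of_lt (by omega), qbin_of_lt h, qbin_of_lt (by omega), mul_zero, add_zero]
  obtain ⟨s, rfl⟩ : ∃ s, m = t + s := ⟨m - t, by omega⟩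
  cases s with
  | zero => simp [qbin_self, qbin_of_lt]
  | succ s =>
    rw [qbin_symm (show t + 1 ≤ t + (s + 1) + 1 by omega),
      qbin_symm (show t ≤ t + (s + 1) by omega), qbin_symm (show t + 1 ≤ t + (s + 1) by omega),
      show t + (s + 1) + 1 - (t + 1) = s + 1 by omega, show t + (s + 1) - t = s + 1 by omega,
      show t + (s + 1) - (t + 1) = s by omega, qbin_succ_succ]
    ring

lemma qbin_mul_qbin_sub_of_lt {r j u : ℕ} (h : r < j + u) : qbin r j * qbin (r - j) u = 0 := by
  rcases Nat.lt_or_ge r j with hj | hj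
  · rw [qbin_of_lt hj, zero_mul]
  · rw [qbin_of_lt (a := r - j) (by omega), mul_zero]

lemma qbin_mul_qbin_sub_comm (r j u : ℕ) :
    qbin r j * qbin (r - j) u = qbin r u * qbin (r - u) j := by
  rcases Nat.lt_or_ge r (j + u) with h | h
  · rw [qbin_mul_qbin_sub_of_lt h, qbin_mul_qbin_sub_of_lt (by omega)]
  obtain ⟨d, rfl⟩ : ∃ d, r = j + u + d := ⟨r - j - u, by omega⟩
  rw [qbin_eq_qfac_div (by omega), qbin_eq_qfac_div (by omega), qbin_eq_qfac_div (by omega),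
    qbin_eq_qfac_div (by omega), show j + u + d - j = u + d by omega, Nat.add_sub_cancel_left,
    show j + u + d - u = j + d by omega, Nat.add_sub_cancel_left]
  field_simp [qfac_ne_zero]

lemma sum_range_mul_qbin_of_lt {a N : ℕ} (h : a < N) (f : ℕ → RatFunc ℚ) :
    ∑ s ∈ range N, f s * qbin a s = ∑ s ∈ range (a + 1), f s * qbin a s :=
  (sum_subset (range_subset_range.2 h) fun s _ hs => by
    rw [qbin_of_lt (by simpa using hs), mul_zero]).symm

lemma Nat.add_choose_two (a b : ℕ) : (a + b).choose 2 = a.choose 2 + b.choose 2 + a * b := by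
  induction b with
  | zero => simp
  | succ b ih =>
    rw [← Nat.add_assoc, Nat.choose_succ_succ, Nat.choose_succ_succ, ih, Nat.choose_one_right,
      Nat.choose_one_right]
    ring

noncomputable def qsign (j : ℕ) : RatFunc ℚ := (-1) ^ j * X ^ j.choose 2

lemma qsign_add (a b : ℕ) : qsign (a + b) = qsign a * qsign b * X ^ (a * b) := by
  rw [qsign, qsign, qsign, Nat.add_choose_two]
  ring

lemma qsign_succ (j : ℕ) : qsign (j + 1) = -(qsign j * X ^ j) := by
  rw [qsign_add]
  simp [qsign]

-- Summation by parts, after splitting `qbin (a + 1) (j + 1)` with `qbin_succ_succ`.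
lemma sum_qsign_mul_qbin_succ (a : ℕ) (c : ℕ → RatFunc ℚ) :
    ∑ s ∈ range (a + 2), qsign s * qbin (a + 1) s * c s
      = ∑ j ∈ range (a + 1), qsign j * X ^ j * qbin a j * (c j - c (j + 1)) := by
  set g : ℕ → RatFunc ℚ := fun j => qsign j * X ^ j * qbin a j
  have hsucc : ∀ j, qsign (j + 1) * qbin (a + 1) (j + 1) = g (j + 1) - g j := fun j => by
    simp only [g, qbin_succ_succ, qsign_succ, pow_succ]
    ring
  have htel : ∑ j ∈ range (a + 1), (g (j + 1) * c (j + 1) - g j * c j) = -c 0 := by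
    rw [sum_range_sub (fun j => g j * c j)]
    simp [g, qbin_of_lt, qbin_zero_right, qsign]
  have hsplit : ∀ j ∈ range (a + 1), (g (j + 1) - g j) * c (j + 1)
      = (g (j + 1) * c (j + 1) - g j * c j) + g j * (c j - c (j + 1)) := fun j _ => by ring
  rw [sum_range_succ']
  simp only [hsucc]
  rw [sum_congr rfl hsplit, sum_add_distrib, htel, qbin_zero_right,
    show qsign 0 = 1 by simp [qsign]]
  ring

lemma X_pow_mul_qbin_sub_succ {m j t : ℕ} (hj : j ≤ m) :
    X ^ j * (qbin (m - j + 1) (t + 1) - qbin (m - j) (t + 1)) = X ^ (m - t) * qbin (m - j) t := by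
  rw [qbin_succ_succ', add_sub_cancel_right, ← mul_assoc, ← pow_add]
  rcases Nat.lt_or_ge (m - j) t with h | h
  · rw [qbin_of_lt h, mul_zero, mul_zero]
  · rw [show j + (m - j - t) = m - t by omega]

-- A q-analogue of `∑ s, (-1)^s * C(a, s) * C(n - s, t) = C(n - a, n - t)`.
lemma sum_qsign_mul_qbin_mul_qbin (a : ℕ) :
    ∀ {n t : ℕ}, a ≤ n → t ≤ n →
      ∑ s ∈ range (a + 1), qsign s * qbin a s * qbin (n - s) t
        = X ^ (a * (n - t)) * qbin (n - a) (n - t) := by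
  induction a with
  | zero =>
    intro n t _ ht
    simp [qsign, qbin_zero_right, qbin_symm ht]
  | succ a ih =>
    intro n t ha ht
    obtain ⟨n, rfl⟩ : ∃ n', n = n' + 1 := ⟨n - 1, by omega⟩
    rw [sum_qsign_mul_qbin_succ a (fun s => qbin (n + 1 - s) t)]
    rcases t with _ | t
    · simp [qbin_zero_right, qbin_of_lt (show n - a < n + 1 by omega)]
    have hterm : ∀ j ∈ range (a + 1),
        qsign j * X ^ j * qbin a j * (qbin (n + 1 - j) (t + 1) - qbin (n + 1 - (j + 1)) (t + 1))
          = X ^ (n - t) * (qsign j * qbin a j * qbin (n - j) t) := fun j hj => by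
      have hjn : j ≤ n := by simp at hj; omega
      rw [show n + 1 - j = n - j + 1 by omega, Nat.add_sub_add_right, mul_left_comm,
        ← X_pow_mul_qbin_sub_succ hjn]
      ring
    rw [sum_congr rfl hterm, ← mul_sum, ih (by omega) (by omega), ← mul_assoc, ← pow_add,
      Nat.add_sub_add_right, Nat.add_sub_add_right]
    ring_nf

lemma sum_qsign_mul_qbin (a : ℕ) :
    ∑ s ∈ range (a + 1), qsign s * qbin a s = if a = 0 then 1 else 0 := by
  have h := sum_qsign_mul_qbin_mul_qbin a (n := a) (t := 0) le_rfl (Nat.zero_le a)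
  simp only [qbin_zero_right, mul_one, Nat.sub_zero, Nat.sub_self] at h
  rw [h]
  split_ifs with ha
  · simp [ha, qbin_self]
  · rw [qbin_of_lt (Nat.pos_of_ne_zero ha), mul_zero]

lemma qsign_mul_X_pow_mul_qsign {p r j : ℕ} (hj : j ≤ r) :
    qsign r * X ^ (p * (r - j)) * qsign (p + j) = qsign (p + r) * qsign j := by
  obtain ⟨i, rfl⟩ : ∃ i, r = j + i := ⟨r - j, by omega⟩
  rw [Nat.add_sub_cancel_left, qsign_add p j, qsign_add p (j + i)]
  ring

noncomputable def qMatrix (n : ℕ) : Matrix (Fin (n + 1)) (Fin (n + 1)) (RatFunc ℚ) :=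
  Matrix.of fun r s => qsign r * qbin (n - r) s

lemma qMatrix_mul_self_apply (n : ℕ) (r t : Fin (n + 1)) :
    (qMatrix n * qMatrix n) r t = qsign r * X ^ ((n - r) * (n - t)) * qbin r (n - t) := by
  have hr : n - r < n + 1 := by omega
  calc (qMatrix n * qMatrix n) r t
      = ∑ s ∈ range (n + 1), qsign r * (qsign s * qbin (n - s) t) * qbin (n - r) s := by
        rw [Matrix.mul_apply, ← Fin.sum_univ_eq_sum_range
          (fun s => qsign r * (qsign s * qbin (n - s) t) * qbin (n - r) s)]
        refine sum_congr rfl fun s _ => ?_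
        simp only [qMatrix, Matrix.of_apply]
        ring
    _ = qsign r * ∑ s ∈ range (n - r + 1), qsign s * qbin (n - r) s * qbin (n - s) t := by
        rw [sum_range_mul_qbin_of_lt hr, mul_sum]
        exact sum_congr rfl fun s _ => by ring
    _ = qsign r * X ^ ((n - r) * (n - t)) * qbin r (n - t) := by
        rw [sum_qsign_mul_qbin_mul_qbin _ (by omega) t.is_le, Nat.sub_sub_self r.is_le, mul_assoc]

lemma sum_qMatrix_cube_entry {n r : ℕ} (hr : r ≤ n) (u : ℕ) :
    ∑ t ∈ range (n + 1), qsign r * X ^ ((n - r) * (n - t)) * qbin r (n - t) *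
        (qsign t * qbin (n - t) u)
      = if r = u then qsign n else 0 := by
  obtain ⟨p, rfl⟩ : ∃ p, n = p + r := ⟨n - r, by omega⟩
  have hlow : ∑ t ∈ range p, qsign r * X ^ (p * (p + r - t)) * qbin r (p + r - t) *
      (qsign t * qbin (p + r - t) u) = 0 :=
    sum_eq_zero fun t ht => by
      rw [qbin_of_lt (a := r) (by simp at ht; omega), mul_zero, zero_mul]
  have hhigh : ∀ j ∈ range (r + 1),
      qsign r * X ^ (p * (p + r - (p + j))) * qbin r (p + r - (p + j)) *
        (qsign (p + j) * qbin (p + r - (p + j)) u)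
        = qsign (p + r) * qbin r u * (qsign j * qbin (r - u) j) := fun j hj => by
    have hjr : j ≤ r := by simp at hj; omega
    rw [Nat.add_sub_add_left, ← qbin_symm hjr, ← mul_assoc, mul_right_comm _ _ (qsign _),
      qsign_mul_X_pow_mul_qsign hjr, mul_assoc, qbin_mul_qbin_sub_comm]
    ring
  rw [Nat.add_sub_cancel, Nat.add_assoc, sum_range_add, hlow, zero_add, sum_congr rfl hhigh,
    ← mul_sum]
  rcases lt_trichotomy r u with h | rfl | h
  · rw [if_neg h.ne, qbin_of_lt h, mul_zero, zero_mul]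
  · rw [if_pos rfl, qbin_self, Nat.sub_self, sum_range_mul_qbin_of_lt r.succ_pos,
      sum_qsign_mul_qbin, if_pos rfl, mul_one, mul_one]
  · rw [if_neg h.ne', sum_range_mul_qbin_of_lt (by omega), sum_qsign_mul_qbin,
      if_neg (by omega), mul_zero]

lemma qMatrix_pow_three (n : ℕ) : qMatrix n ^ 3 = qsign n • 1 := by
  ext r u
  rw [pow_succ, pow_two, Matrix.mul_apply, Matrix.smul_apply, Matrix.one_apply, smul_eq_mul,
    mul_ite, mul_one, mul_zero]
  simp only [qMatrix_mul_self_apply]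
  simp only [qMatrix, Matrix.of_apply, ← Fin.val_inj]
  exact (Fin.sum_univ_eq_sum_range (fun t => qsign r * X ^ ((n - r) * (n - t)) * qbin r (n - t) *
    (qsign t * qbin (n - t) u)) (n + 1)).trans (sum_qMatrix_cube_entry r.is_le u)

namespace Matrix

variable {R ι : Type*} [CommSemiring R] [Fintype ι] [DecidableEq ι]

lemma sum_prod_path_mul (M : Matrix ι ι R) (c : ℕ) (g : ι → ι → R) :
    ∑ f : Fin (c + 1) → ι,
        (∏ k : Fin c, M (f k.castSucc) (f k.succ)) * g (f 0) (f (Fin.last c))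
      = ∑ i, ∑ j, (M ^ c) i j * g i j := by
  induction c generalizing g with
  | zero =>
    rw [← (Equiv.funUnique (Fin 1) ι).symm.sum_comp]
    simp [one_apply]
  | succ c ih =>
    rw [← (Fin.consEquiv fun _ => ι).sum_comp, Fintype.sum_prod_type]
    refine sum_congr rfl fun x _ => ?_
    calc _ = ∑ h : Fin (c + 1) → ι, (∏ k : Fin c, M (h k.castSucc) (h k.succ)) *
            (M x (h 0) * g x (h (Fin.last c))) := sum_congr rfl fun h _ => by
          simp only [Fin.consEquiv_apply, Fin.prod_univ_succ, Fin.castSucc_zero, Fin.cons_zero,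
            Fin.castSucc_succ, Fin.cons_succ, show Fin.last (c + 1) = (Fin.last c).succ from rfl]
          ring
      _ = ∑ i, ∑ j, (M ^ c) i j * (M x i * g x j) := ih fun i j => M x i * g x j
      _ = ∑ j, (M ^ (c + 1)) x j * g x j := by
          rw [sum_comm]
          refine sum_congr rfl fun j _ => ?_
          rw [pow_succ', mul_apply, sum_mul]
          exact sum_congr rfl fun i _ => by ring

lemma sum_prod_cyclic_eq_trace_pow (M : Matrix ι ι R) (L : ℕ) [NeZero L] :
    ∑ f : Fin L → ι, ∏ k, M (f k) (f (k + 1)) = (M ^ L).trace := by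
  obtain ⟨c, rfl⟩ : ∃ c, L = c + 1 := Nat.exists_eq_succ_of_ne_zero (NeZero.ne L)
  have hsplit : ∀ f : Fin (c + 1) → ι, ∏ k, M (f k) (f (k + 1))
      = (∏ k : Fin c, M (f k.castSucc) (f k.succ)) * M (f (Fin.last c)) (f 0) := fun f => by
    simp only [Fin.prod_univ_castSucc, Fin.coeSucc_eq_succ, Fin.last_add_one]
  simp only [hsplit, sum_prod_path_mul M c fun i j => M j i, trace, diag, pow_succ, mul_apply]

end Matrix

theorem stmt7 (m n : ℕ) (hm : 0 < m) :
    ∑ r : Fin (3 * m) → Fin (n + 1), ∏ k : Fin (3 * m),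
      (qbin (n - (r k : ℕ)) (r ⟨((k : ℕ) + 1) % (3 * m), Nat.mod_lt _ (by omega)⟩ : ℕ) *
        RatFunc.X ^ ((r k : ℕ)).choose 2 * (-1 : RatFunc ℚ) ^ (r k : ℕ))
    = (-1 : RatFunc ℚ) ^ (m * n) * ((n : RatFunc ℚ) + 1) * RatFunc.X ^ (m * n.choose 2) := by
  have : NeZero (3 * m) := ⟨by omega⟩
  have hnext : ∀ k : Fin (3 * m),
      (⟨((k : ℕ) + 1) % (3 * m), Nat.mod_lt _ (by omega)⟩ : Fin (3 * m)) = k + 1 :=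
    fun k => Fin.ext (by simp [Fin.val_add])
  have hentry : ∀ r s : Fin (n + 1),
      qbin (n - r) s * X ^ (r : ℕ).choose 2 * (-1) ^ (r : ℕ) = qMatrix n r s := fun r s => by
    rw [qMatrix, Matrix.of_apply, qsign]
    ring
  simp only [hnext, hentry]
  rw [Matrix.sum_prod_cyclic_eq_trace_pow, pow_mul, qMatrix_pow_three, smul_pow, one_pow,
    Matrix.trace_smul, Matrix.trace_one, Fintype.card_fin, qsign]
  push_cast
  ring
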